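/- Fix λ ∈ {0,1} and x ∈ ℝ³, let g_λ(k) := ‖k‖^{−1/2} ε(k,λ), and set g̃_{x,λ}(k) := (e^{i⟨k,x⟩} − 1) g_λ(k) ∈ ℂ³. For all k, h ∈ ℝ³ with k ≠ 0, k−h ≠ 0, k_⊥ ≠ 0 and (k−h)_⊥ ≠ 0 one has ‖g̃_{x,λ}(k−h) − g̃_{x,λ}(k)‖ ≤ ‖k‖ ‖x‖ ‖g_λ(k−h) − g_λ(k)‖ + ‖h‖ ‖x‖ ‖k−h‖^{−1/2}. -/

import Mathlib

noncomputable section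

/-- `k_⊥ := (k₂, −k₁, 0)` for `k ∈ ℝ³`. -/
def perp (k : EuclideanSpace ℝ (Fin 3)) : EuclideanSpace ℝ (Fin 3) :=
  (WithLp.equiv 2 (Fin 3 → ℝ)).symm ![k 1, -(k 0), 0]

/-- The vector cross product on `ℝ³` (as Euclidean space). -/
def cross3 (a b : EuclideanSpace ℝ (Fin 3)) : EuclideanSpace ℝ (Fin 3) :=
  (WithLp.equiv 2 (Fin 3 → ℝ)).symm
    ![a 1 * b 2 - a 2 * b 1, a 2 * b 0 - a 0 * b 2, a 0 * b 1 - a 1 * b 0]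

/-- First Coulomb-gauge polarization vector `ε(k,0) := k_⊥ / ‖k_⊥‖`. -/
def eps0 (k : EuclideanSpace ℝ (Fin 3)) : EuclideanSpace ℝ (Fin 3) :=
  ‖perp k‖⁻¹ • perp k

/-- Second Coulomb-gauge polarization vector `ε(k,1) := (k/‖k‖) × ε(k,0)`. -/
def eps1 (k : EuclideanSpace ℝ (Fin 3)) : EuclideanSpace ℝ (Fin 3) :=
  cross3 (‖k‖⁻¹ • k) (eps0 k)

/-- The polarization vector `ε(k,λ)` for `λ ∈ {0,1}`. -/
def eps (lam : Fin 2) (k : EuclideanSpace ℝ (Fin 3)) : EuclideanSpace ℝ (Fin 3) :=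
  if lam = 0 then eps0 k else eps1 k

/-- The photon form factor `g_λ(k) := ‖k‖^{-1/2} ε(k,λ)`. -/
def gfac (lam : Fin 2) (k : EuclideanSpace ℝ (Fin 3)) : EuclideanSpace ℝ (Fin 3) :=
  (‖k‖ ^ (-(1 : ℝ) / 2)) • eps lam k

/-- Coordinatewise complexification `ℝ³ → ℂ³`. -/
def toC (v : EuclideanSpace ℝ (Fin 3)) : EuclideanSpace ℂ (Fin 3) :=
  (WithLp.equiv 2 (Fin 3 → ℂ)).symm fun i => (v i : ℂ)

/-- Gauge-transformed form factor `g̃_{x,λ}(k) := (e^{i⟨k,x⟩} − 1) g_λ(k) ∈ ℂ³`. -/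
def gtilde (lam : Fin 2) (x k : EuclideanSpace ℝ (Fin 3)) : EuclideanSpace ℂ (Fin 3) :=
  (Complex.exp (Complex.I * ((inner ℝ k x : ℝ) : ℂ)) - 1) • toC (gfac lam k)

/-!
Write `α, β` for the phase factors `e^{i⟨k−h,x⟩} − 1` and `e^{i⟨k,x⟩} − 1`, so that
`g̃(k−h) − g̃(k) = β (g(k−h) − g(k)) + (α − β) g(k−h)`. Since `θ ↦ e^{iθ}` is 1-Lipschitz,
`|β| ≤ |⟨k,x⟩| ≤ ‖k‖‖x‖` and `|α − β| ≤ |⟨h,x⟩| ≤ ‖h‖‖x‖`; and `‖g(k−h)‖ ≤ ‖k−h‖^{-1/2}`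
because both polarization vectors have norm at most one.
-/

open scoped Matrix

lemma norm_smul_sub_smul_le {𝕜 E : Type*} [NormedField 𝕜] [SeminormedAddCommGroup E]
    [NormedSpace 𝕜 E] (a b : 𝕜) (p q : E) :
    ‖a • p - b • q‖ ≤ ‖b‖ * ‖p - q‖ + ‖a - b‖ * ‖p‖ :=
  calc ‖a • p - b • q‖ = ‖b • (p - q) + (a - b) • p‖ := by congr 1; module
    _ ≤ ‖b‖ * ‖p - q‖ + ‖a - b‖ * ‖p‖ := by
      rw [← norm_smul, ← norm_smul]
      exact norm_add_le _ _

lemma norm_exp_I_mul_ofReal_sub_exp_I_mul_ofReal_le (θ θ' : ℝ) :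
    ‖Complex.exp (Complex.I * θ) - Complex.exp (Complex.I * θ')‖ ≤ |θ - θ'| := by
  have hfactor : Complex.exp (Complex.I * θ) - Complex.exp (Complex.I * θ')
      = Complex.exp (Complex.I * θ') * (Complex.exp (Complex.I * (θ - θ' : ℝ)) - 1) := by
    rw [mul_sub, mul_one, ← Complex.exp_add]
    push_cast
    ring_nf
  rw [hfactor, norm_mul, Complex.norm_exp_I_mul_ofReal, one_mul, ← Real.norm_eq_abs]
  exact Real.norm_exp_I_mul_ofReal_sub_one_le

lemma toC_sub (a b : EuclideanSpace ℝ (Fin 3)) : toC (a - b) = toC a - toC b := by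
  ext i
  simp [toC]

lemma norm_toC (v : EuclideanSpace ℝ (Fin 3)) : ‖toC v‖ = ‖v‖ := by
  simp [EuclideanSpace.norm_eq, toC]

lemma cross3_eq_crossProduct (a b : EuclideanSpace ℝ (Fin 3)) :
    cross3 a b = WithLp.toLp 2 (a.ofLp ⨯₃ b.ofLp) := rfl

lemma norm_cross3_sq (a b : EuclideanSpace ℝ (Fin 3)) :
    ‖cross3 a b‖ ^ 2 = ‖a‖ ^ 2 * ‖b‖ ^ 2 - inner ℝ a b ^ 2 := by
  simp only [← real_inner_self_eq_norm_sq, EuclideanSpace.inner_eq_star_dotProduct,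
    cross3_eq_crossProduct, star_trivial]
  rw [cross_dot_cross]
  simp [dotProduct_comm]
  ring

lemma norm_cross3_le (a b : EuclideanSpace ℝ (Fin 3)) : ‖cross3 a b‖ ≤ ‖a‖ * ‖b‖ := by
  rw [← sq_le_sq₀ (norm_nonneg _) (by positivity), norm_cross3_sq]
  nlinarith [sq_nonneg (inner ℝ a b)]

-- No nondegeneracy is needed: for `v = 0` the junk value `‖0‖⁻¹ = 0` gives `‖‖v‖⁻¹ • v‖ = 0`.
lemma norm_inv_norm_smul_le_one {E : Type*} [SeminormedAddCommGroup E] [NormedSpace ℝ E]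
    (v : E) : ‖‖v‖⁻¹ • v‖ ≤ 1 :=
  mem_closedBall_zero_iff.mp (inv_norm_smul_mem_unitClosedBall v)

lemma norm_eps_le_one (lam : Fin 2) (k : EuclideanSpace ℝ (Fin 3)) : ‖eps lam k‖ ≤ 1 := by
  unfold eps
  split_ifs
  · exact norm_inv_norm_smul_le_one _
  · calc ‖cross3 (‖k‖⁻¹ • k) (eps0 k)‖ ≤ ‖‖k‖⁻¹ • k‖ * ‖eps0 k‖ := norm_cross3_le _ _
      _ ≤ 1 * 1 := by
        gcongr
        exacts [norm_inv_norm_smul_le_one k, norm_inv_norm_smul_le_one _]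
      _ = 1 := one_mul 1

lemma norm_gfac_le (lam : Fin 2) (k : EuclideanSpace ℝ (Fin 3)) :
    ‖gfac lam k‖ ≤ ‖k‖ ^ (-(1 : ℝ) / 2) := by
  rw [gfac, norm_smul, Real.norm_of_nonneg (by positivity)]
  exact mul_le_of_le_one_right (by positivity) (norm_eps_le_one lam k)

theorem stmt8_general (lam : Fin 2) (x k h : EuclideanSpace ℝ (Fin 3)) :
    ‖gtilde lam x (k - h) - gtilde lam x k‖ ≤
      ‖k‖ * ‖x‖ * ‖gfac lam (k - h) - gfac lam k‖ +
        ‖h‖ * ‖x‖ * ‖k - h‖ ^ (-(1 : ℝ) / 2) := by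
  set α := Complex.exp (Complex.I * (inner ℝ (k - h) x : ℝ)) - 1
  set β := Complex.exp (Complex.I * (inner ℝ k x : ℝ)) - 1
  have hβ : ‖β‖ ≤ ‖k‖ * ‖x‖ :=
    Real.norm_exp_I_mul_ofReal_sub_one_le.trans (abs_real_inner_le_norm k x)
  have hαβ : ‖α - β‖ ≤ ‖h‖ * ‖x‖ := by
    rw [sub_sub_sub_cancel_right]
    refine (norm_exp_I_mul_ofReal_sub_exp_I_mul_ofReal_le _ _).trans ?_
    rw [inner_sub_left, sub_sub_cancel_left, abs_neg]
    exact abs_real_inner_le_norm h x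
  have hsplit : ‖gtilde lam x (k - h) - gtilde lam x k‖
      ≤ ‖β‖ * ‖gfac lam (k - h) - gfac lam k‖ + ‖α - β‖ * ‖gfac lam (k - h)‖ := by
    rw [← norm_toC, ← norm_toC, toC_sub]
    exact norm_smul_sub_smul_le α β _ _
  refine hsplit.trans ?_
  gcongr
  exact norm_gfac_le lam (k - h)

/-- **Discrete derivative bound on the gauge-transformed form factor** (from
the proof of Proposition 5.5, the photon derivative bound):
`‖g̃_{x,λ}(k−h) − g̃_{x,λ}(k)‖ ≤ ‖k‖‖x‖‖g_λ(k−h) − g_λ(k)‖ + ‖h‖‖x‖‖k−h‖^{-1/2}`. -/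
theorem stmt8 (lam : Fin 2) (x k h : EuclideanSpace ℝ (Fin 3))
    (hk : k ≠ 0) (hkh : k - h ≠ 0)
    (hkp : perp k ≠ 0) (hkhp : perp (k - h) ≠ 0) :
    ‖gtilde lam x (k - h) - gtilde lam x k‖ ≤
      ‖k‖ * ‖x‖ * ‖gfac lam (k - h) - gfac lam k‖ +
        ‖h‖ * ‖x‖ * ‖k - h‖ ^ (-(1 : ℝ) / 2) :=
  stmt8_general lam x k h
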